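/- Let n, p₁, p₂, q be natural numbers, H > 0, D ⊆ ℝⁿ. Let u : [0,H] → ℝ^q, Θ_top : ℝⁿ × ℝ^q → L(ℝ^{p₁}, ℝⁿ), Θ_fix : ℝⁿ × ℝ^q → L(ℝ^{p₂}, ℝⁿ), ξ_tv, ξ̂_tv : [0,H] → ℝ^{p₁}, and ξ̄ ∈ ℝ^{p₂}. Define f_tv(t,x) := Θ_top(x,u(t)) ξ_tv(t) + Θ_fix(x,u(t)) ξ̄ and f̂_tv(t,x) := Θ_top(x,u(t)) ξ̂_tv(t) + Θ_fix(x,u(t)) ξ̄. Assume: (i) for each t ∈ [0,H], x ↦ f_tv(t,x) is Lipschitz on D with constant L > 0; (ii) ‖Θ_top(x,u(t))‖_op ≤ B_top for all (t,x) ∈ [0,H] × D with B_top > 0; (iii) ‖ξ̂_tv(t) − ξ_tv(t)‖ ≤ ε_top for all t ∈ [0,H] with ε_top ≥ 0. Let x : [0,H] → D solve x'(t) = f_tv(t,x(t)) and x̂ : [0,H] → D solve x̂'(t) = f̂_tv(t,x̂(t)) with x(0) = x̂(0), and suppose x(t), x̂(t) ∈ D for all t ∈ [0,H]. Then for all t ∈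 [0,H], ‖x(t) − x̂(t)‖ ≤ (B_top ε_top / L)·(e^{L t} − 1) ≤ (B_top ε_top / L)·(e^{L H} − 1). -/

import Mathlib

/-! The forecast trajectory `x̂` solves the true ODE `x' = f_tv(t, x)` up to the forcing
term `Θ_top(x̂, u)(ξ̂_tv - ξ_tv)`, of norm at most `B_top ε_top`: the `Θ_fix ξ̄` contributions
cancel exactly. Grönwall's inequality for approximate trajectories of an `L`-Lipschitz field,
started from the same point, then bounds `‖x - x̂‖` by `(B_top ε_top / L)(e^{Lt} - 1)`, which
is increasing in `t`. -/

open Set NNReal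

theorem gronwallBound_zero_left {K : ℝ} (hK : K ≠ 0) (ε x : ℝ) :
    gronwallBound 0 K ε x = ε / K * (Real.exp (K * x) - 1) := by
  simp only [gronwallBound_of_K_ne_0 hK, zero_mul, zero_add]

theorem norm_sub_le_gronwallBound_of_approx_trajectory {E : Type*} [NormedAddCommGroup E]
    [NormedSpace ℝ E] {v : ℝ → E → E} {D : Set E} {K : ℝ≥0} {a b ε : ℝ}
    {x y y' : ℝ → E}
    (hv : ∀ t ∈ Ico a b, LipschitzOnWith K (v t) D)
    (hx : ∀ t ∈ Icc a b, HasDerivAt x (v t (x t)) t)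
    (hy : ∀ t ∈ Icc a b, HasDerivAt y (y' t) t)
    (hy' : ∀ t ∈ Ico a b, ‖y' t - v t (y t)‖ ≤ ε)
    (hxD : ∀ t ∈ Ico a b, x t ∈ D) (hyD : ∀ t ∈ Ico a b, y t ∈ D) (ha : x a = y a) :
    ∀ t ∈ Icc a b, ‖x t - y t‖ ≤ gronwallBound 0 K ε (t - a) := by
  intro t ht
  have hdist := dist_le_of_approx_trajectories_ODE_of_mem (s := fun _ => D) (εf := 0) hv
    (fun s hs => (hx s hs).continuousAt.continuousWithinAt)
    (fun s hs => (hx s (Ico_subset_Icc_self hs)).hasDerivWithinAt)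
    (fun s _ => (dist_self _).le) hxD
    (fun s hs => (hy s hs).continuousAt.continuousWithinAt)
    (fun s hs => (hy s (Ico_subset_Icc_self hs)).hasDerivWithinAt)
    (fun s hs => (dist_eq_norm _ _).trans_le (hy' s hs)) hyD (dist_le_zero.mpr ha) t ht
  rwa [zero_add, dist_eq_norm] at hdist

theorem ContinuousLinearMap.norm_map_add_sub_map_add_le {𝕜 E F : Type*}
    [NontriviallyNormedField 𝕜] [SeminormedAddCommGroup E] [SeminormedAddCommGroup F]
    [NormedSpace 𝕜 E] [NormedSpace 𝕜 F]
    (A : E →L[𝕜] F) (c : F) {ξ ξ' : E} {B ε : ℝ} (hA : ‖A‖ ≤ B) (hξ : ‖ξ' - ξ‖ ≤ ε) :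
    ‖(A ξ' + c) - (A ξ + c)‖ ≤ B * ε := by
  rw [add_sub_add_right_eq_sub, ← map_sub]
  exact A.le_of_opNorm_le_of_le hA hξ

theorem split_model_forecast_error_bound_general
    (n p₁ p₂ q : ℕ) (H L Btop εtop : ℝ) (hL : 0 < L)
    (D : Set (EuclideanSpace ℝ (Fin n)))
    (u : ℝ → EuclideanSpace ℝ (Fin q))
    (Θtop : EuclideanSpace ℝ (Fin n) → EuclideanSpace ℝ (Fin q) →
        (EuclideanSpace ℝ (Fin p₁) →L[ℝ] EuclideanSpace ℝ (Fin n)))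
    (Θfix : EuclideanSpace ℝ (Fin n) → EuclideanSpace ℝ (Fin q) →
        (EuclideanSpace ℝ (Fin p₂) →L[ℝ] EuclideanSpace ℝ (Fin n)))
    (ξtv ξhtv : ℝ → EuclideanSpace ℝ (Fin p₁))
    (ξbar : EuclideanSpace ℝ (Fin p₂))
    (hLip : ∀ t ∈ Set.Icc (0:ℝ) H, ∀ a ∈ D, ∀ b ∈ D,
      ‖(Θtop a (u t) (ξtv t) + Θfix a (u t) ξbar)
        - (Θtop b (u t) (ξtv t) + Θfix b (u t) ξbar)‖ ≤ L * ‖a - b‖)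
    (hop : ∀ t ∈ Set.Icc (0:ℝ) H, ∀ x ∈ D, ‖Θtop x (u t)‖ ≤ Btop)
    (hpar : ∀ t ∈ Set.Icc (0:ℝ) H, ‖ξhtv t - ξtv t‖ ≤ εtop)
    (x xh : ℝ → EuclideanSpace ℝ (Fin n))
    (hxD : ∀ t ∈ Set.Icc (0:ℝ) H, x t ∈ D)
    (hxhD : ∀ t ∈ Set.Icc (0:ℝ) H, xh t ∈ D)
    (hx : ∀ t ∈ Set.Icc (0:ℝ) H,
      HasDerivAt x (Θtop (x t) (u t) (ξtv t) + Θfix (x t) (u t) ξbar) t)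
    (hxh : ∀ t ∈ Set.Icc (0:ℝ) H,
      HasDerivAt xh (Θtop (xh t) (u t) (ξhtv t) + Θfix (xh t) (u t) ξbar) t)
    (h0 : x 0 = xh 0) :
    ∀ t ∈ Set.Icc (0:ℝ) H,
      ‖x t - xh t‖ ≤ (Btop * εtop / L) * (Real.exp (L * t) - 1) ∧
      ‖x t - xh t‖ ≤ (Btop * εtop / L) * (Real.exp (L * H) - 1) := by
  intro t ht
  have hforcing : ∀ s ∈ Icc (0:ℝ) H,
      ‖(Θtop (xh s) (u s) (ξhtv s) + Θfix (xh s) (u s) ξbar)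
        - (Θtop (xh s) (u s) (ξtv s) + Θfix (xh s) (u s) ξbar)‖ ≤ Btop * εtop := fun s hs =>
    (Θtop (xh s) (u s)).norm_map_add_sub_map_add_le _ (hop s hs _ (hxhD s hs)) (hpar s hs)
  have hLipOn : ∀ s ∈ Ico (0:ℝ) H, LipschitzOnWith L.toNNReal
      (fun y => Θtop y (u s) (ξtv s) + Θfix y (u s) ξbar) D := fun s hs =>
    .of_dist_le' fun a ha b hb => by
      simpa only [dist_eq_norm] using hLip s (Ico_subset_Icc_self hs) a ha b hb
  have hbound := norm_sub_le_gronwallBound_of_approx_trajectory hLipOn hx hxh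
    (fun s hs => hforcing s (Ico_subset_Icc_self hs))
    (fun s hs => hxD s (Ico_subset_Icc_self hs)) (fun s hs => hxhD s (Ico_subset_Icc_self hs))
    h0 t ht
  have hmono := gronwallBound_mono le_rfl ((norm_nonneg _).trans (hforcing t ht)) hL.le ht.2
  rw [sub_zero, Real.coe_toNNReal L hL.le] at hbound
  simp only [gronwallBound_zero_left hL.ne'] at hbound hmono
  exact ⟨hbound, hbound.trans hmono⟩

/-- **Split-model forecast bound: only the top-N coefficient forecast errors enter.**
For the split model `f_tv(t,x) = Θ_top(x,u(t)) ξ_tv(t) + Θ_fix(x,u(t)) ξ̄` and its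
forecast counterpart with `ξ_tv` replaced by `ξ̂_tv`, if `f_tv` is Lipschitz in the
state on `D` with constant `L > 0`, `‖Θ_top(x,u(t))‖_op ≤ B_top` on `[0,H] × D`, and
`‖ξ̂_tv(t) - ξ_tv(t)‖ ≤ ε_top` on `[0,H]`, then for trajectories `x`, `x̂` in `D` with
the same initial condition,
`‖x t - x̂ t‖ ≤ (B_top ε_top / L)·(e^{Lt} - 1) ≤ (B_top ε_top / L)·(e^{LH} - 1)`. -/
theorem split_model_forecast_error_bound
    (n p₁ p₂ q : ℕ) (H L Btop εtop : ℝ) (hH : 0 < H) (hL : 0 < L)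
    (hBtop : 0 < Btop) (hεtop : 0 ≤ εtop)
    (D : Set (EuclideanSpace ℝ (Fin n)))
    (u : ℝ → EuclideanSpace ℝ (Fin q))
    (Θtop : EuclideanSpace ℝ (Fin n) → EuclideanSpace ℝ (Fin q) →
        (EuclideanSpace ℝ (Fin p₁) →L[ℝ] EuclideanSpace ℝ (Fin n)))
    (Θfix : EuclideanSpace ℝ (Fin n) → EuclideanSpace ℝ (Fin q) →
        (EuclideanSpace ℝ (Fin p₂) →L[ℝ] EuclideanSpace ℝ (Fin n)))
    (ξtv ξhtv : ℝ → EuclideanSpace ℝ (Fin p₁))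
    (ξbar : EuclideanSpace ℝ (Fin p₂))
    (hLip : ∀ t ∈ Set.Icc (0:ℝ) H, ∀ a ∈ D, ∀ b ∈ D,
      ‖(Θtop a (u t) (ξtv t) + Θfix a (u t) ξbar)
        - (Θtop b (u t) (ξtv t) + Θfix b (u t) ξbar)‖ ≤ L * ‖a - b‖)
    (hop : ∀ t ∈ Set.Icc (0:ℝ) H, ∀ x ∈ D, ‖Θtop x (u t)‖ ≤ Btop)
    (hpar : ∀ t ∈ Set.Icc (0:ℝ) H, ‖ξhtv t - ξtv t‖ ≤ εtop)
    (x xh : ℝ → EuclideanSpace ℝ (Fin n))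
    (hxD : ∀ t ∈ Set.Icc (0:ℝ) H, x t ∈ D)
    (hxhD : ∀ t ∈ Set.Icc (0:ℝ) H, xh t ∈ D)
    (hx : ∀ t ∈ Set.Icc (0:ℝ) H,
      HasDerivAt x (Θtop (x t) (u t) (ξtv t) + Θfix (x t) (u t) ξbar) t)
    (hxh : ∀ t ∈ Set.Icc (0:ℝ) H,
      HasDerivAt xh (Θtop (xh t) (u t) (ξhtv t) + Θfix (xh t) (u t) ξbar) t)
    (h0 : x 0 = xh 0) :
    ∀ t ∈ Set.Icc (0:ℝ) H,
      ‖x t - xh t‖ ≤ (Btop * εtop / L) * (Real.exp (L * t) - 1) ∧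
      ‖x t - xh t‖ ≤ (Btop * εtop / L) * (Real.exp (L * H) - 1) :=
  split_model_forecast_error_bound_general n p₁ p₂ q H L Btop εtop hL D u Θtop Θfix ξtv ξhtv ξbar
    hLip hop hpar x xh hxD hxhD hx hxh h0
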